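/- Define the ternary operation T(a,b,c) = a + b − c on ZMod 3. Then the set {(a,b,c,d,e) ∈ (ZMod 3)⁵ | e = T(a,b,c) ∧ e = T(a,c,d) ∧ e = T(a,d,b)} has exactly 27 elements; in particular this number differs from 9 = 3², the number of colorings of the standard unknot diagram (which has two regions, each of which may be colored freely by an element of ZMod 3). -/
import Mathlib

/-- For the tribracket `T(a,b,c) = a + b − c` on `ZMod 3`, the set of colorings
of the standard trefoil diagram (tuples `(a,b,c,d,e)` with
`e = T(a,b,c) = T(a,c,d) = T(a,d,b)`) has exactly 27 elements, which differs from
`9 = 3²`, the number of colorings of the standard unknot diagram. -/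
theorem trefoil_tribracket_counting (T : ZMod 3 → ZMod 3 → ZMod 3 → ZMod 3)
    (hT : ∀ a b c, T a b c = a + b - c) :
    Nat.card {v : ZMod 3 × ZMod 3 × ZMod 3 × ZMod 3 × ZMod 3 |
      v.2.2.2.2 = T v.1 v.2.1 v.2.2.1 ∧
      v.2.2.2.2 = T v.1 v.2.2.1 v.2.2.2.1 ∧
      v.2.2.2.2 = T v.1 v.2.2.2.1 v.2.1} = 27 ∧ 27 ≠ 3 ^ 2 := by
  constructor
  · simp only [hT]
    rw [Nat.card_eq_card_toFinset]
    decide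
  · decide
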